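/- arXiv:1806.03396 — 2 statements merged into one kernel-verified Lean document; each statement's English description precedes it below -/
import Mathlib

section
/- Let Λ = diag(λ₁,…,λₙ) with λ_i < 0 distinct, and Ψ_{ij} = −1/(λ_i+λ_j). Suppose (β, γ, μ_β, μ_γ) satisfies diag(γ)Ψdiag(γ)β = μ_β Λ²β and diag(β)Ψdiag(β)γ = μ_γ Λ²γ with the normalization β᷀Λ²β = γ᷀Λ²γ = 1. Then the supports of β and γ (index sets of nonzero entries) are either disjoint or equal. -/
/-!
Write `v = γ * β` entrywise. Pairing the first equation with `β` and using the normalisation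
gives `μβ = vᵀ Ψ v`, and likewise `μγ = vᵀ Ψ v`. With `x = -λ > 0` distinct, `Ψ = ((x i + x j)⁻¹)`
is positive definite: `vᵀ Ψ v = ∫₀^∞ (∑ i, v i e^{-x i t})² dt`, and an exponential sum with
distinct exponents and nonzero coefficients is eventually nonzero. So if the supports meet, then
`v ≠ 0` and `μβ, μγ > 0`; if moreover `γ i = 0`, the `i`-th row of the first equation reads
`0 = μβ λ_i² β_i`, so `β i = 0`, and symmetrically.
-/

open Matrix MeasureTheory Filter Set Real

theorem eventually_sum_mul_exp_mul_ne_zero {ι : Type*} [Fintype ι] {x : ι → ℝ}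
    (hx : Function.Injective x) {v : ι → ℝ} (hv : v ≠ 0) :
    ∀ᶠ t in atTop, ∑ i, v i * exp (x i * t) ≠ 0 := by
  classical
  obtain ⟨i₀, hi₀, hmax⟩ := (Finset.univ.filter (v · ≠ 0)).exists_max_image x
    (by simpa [Finset.filter_nonempty_iff, Function.ne_iff] using hv)
  replace hi₀ : v i₀ ≠ 0 := (Finset.mem_filter.mp hi₀).2
  -- after rescaling by `exp (-x i₀ * t)`, every term but the one with the largest exponent decays
  have hterm : ∀ i, Tendsto (fun t => v i * exp ((x i - x i₀) * t)) atTop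
      (nhds (if i = i₀ then v i₀ else 0)) := by
    intro i
    by_cases hii₀ : i = i₀
    · subst hii₀; simp
    by_cases hvi : v i = 0
    · simp [hvi, hii₀]
    have hlt : x i - x i₀ < 0 := sub_neg.mpr <| (hmax i (by simpa using hvi)).lt_of_ne
      fun h => hii₀ (hx h)
    simpa [hii₀] using
      (tendsto_exp_atBot.comp (tendsto_id.const_mul_atTop_of_neg hlt)).const_mul (v i)
  have hlim : Tendsto (fun t => exp (-x i₀ * t) * ∑ i, v i * exp (x i * t)) atTop
      (nhds (v i₀)) := by
    convert tendsto_finsetSum Finset.univ fun i _ => hterm i using 1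
    · ext t
      rw [Finset.mul_sum]
      refine Finset.sum_congr rfl fun i _ => ?_
      rw [mul_left_comm, ← exp_add]
      ring_nf
    · simp
  filter_upwards [hlim.eventually_ne hi₀] with t ht hzero
  exact ht (by rw [hzero, mul_zero])

theorem integral_sq_sum_mul_exp_neg_mul {ι : Type*} [Fintype ι] {x : ι → ℝ}
    (hx : ∀ i, 0 < x i) (v : ι → ℝ) :
    IntegrableOn (fun t => (∑ i, v i * exp (-x i * t)) ^ 2) (Ioi 0) ∧
    ∫ t in Ioi 0, (∑ i, v i * exp (-x i * t)) ^ 2 = ∑ i, ∑ j, v i * v j / (x i + x j) := by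
  have hsq : ∀ t, (∑ i, v i * exp (-x i * t)) ^ 2 =
      ∑ i, ∑ j, v i * v j * exp (-(x i + x j) * t) := by
    intro t
    rw [sq, Finset.sum_mul_sum]
    refine Finset.sum_congr rfl fun i _ => Finset.sum_congr rfl fun j _ => ?_
    rw [show -(x i + x j) * t = -x i * t + -x j * t by ring, exp_add]
    ring
  have hint : ∀ i j, IntegrableOn (fun t => v i * v j * exp (-(x i + x j) * t)) (Ioi 0) :=
    fun i j => (exp_neg_integrableOn_Ioi 0 (add_pos (hx i) (hx j))).const_mul _
  simp_rw [hsq]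
  refine ⟨integrable_finsetSum _ fun i _ => integrable_finsetSum _ fun j _ => hint i j, ?_⟩
  rw [integral_finsetSum _ fun i _ => integrable_finsetSum _ fun j _ => hint i j]
  refine Finset.sum_congr rfl fun i _ => ?_
  rw [integral_finsetSum _ fun j _ => hint i j]
  refine Finset.sum_congr rfl fun j _ => ?_
  rw [integral_const_mul, integral_exp_mul_Ioi (by linarith [hx i, hx j]), mul_zero, exp_zero, neg_div_neg_eq, mul_one_div]

theorem Matrix.posDef_of_inv_add {ι : Type*} [Fintype ι] {x : ι → ℝ} (hpos : ∀ i, 0 < x i)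
    (hx : Function.Injective x) : (of fun i j => (x i + x j)⁻¹).PosDef := by
  refine .of_dotProduct_mulVec_pos (IsHermitian.ext fun i j => by simp [add_comm]) fun v hv => ?_
  obtain ⟨hint, hval⟩ := integral_sq_sum_mul_exp_neg_mul hpos v
  have hform : star v ⬝ᵥ (of fun i j => (x i + x j)⁻¹) *ᵥ v =
      ∑ i, ∑ j, v i * v j / (x i + x j) := by
    simp only [star_trivial, dotProduct, mulVec, of_apply, Finset.mul_sum]
    exact Finset.sum_congr rfl fun i _ => Finset.sum_congr rfl fun j _ => by ring
  rw [hform, ← hval, setIntegral_pos_iff_support_of_nonneg_ae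
    (ae_of_all _ fun t => sq_nonneg _) hint]
  have hcont : Continuous fun t => (∑ i, v i * exp (-x i * t)) ^ 2 := by fun_prop
  obtain ⟨t, ht, htpos⟩ := ((eventually_sum_mul_exp_mul_ne_zero (neg_injective.comp hx) hv).and
    (eventually_gt_atTop 0)).exists
  exact (hcont.isOpen_support.inter isOpen_Ioi).measure_pos _ ⟨t, pow_ne_zero 2 ht, htpos⟩

theorem Matrix.dotProduct_diagonal_mul_mul_diagonal_mulVec {ι R : Type*} [Fintype ι]
    [DecidableEq ι] [CommSemiring R] (M : Matrix ι ι R) (a b : ι → R) :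
    b ⬝ᵥ (diagonal a * M * diagonal a) *ᵥ b = (a * b) ⬝ᵥ M *ᵥ (a * b) := by
  simp only [dotProduct, mulVec, mul_diagonal, diagonal_mul, Pi.mul_apply, Finset.mul_sum]
  exact Finset.sum_congr rfl fun i _ => Finset.sum_congr rfl fun j _ => by ring

theorem Matrix.eq_dotProduct_mulVec_of_mulVec_eq_smul {ι R : Type*} [Fintype ι] [CommSemiring R]
    {A B : Matrix ι ι R} {v : ι → R} {μ : R} (h : A *ᵥ v = μ • B *ᵥ v)
    (hv : v ⬝ᵥ B *ᵥ v = 1) : μ = v ⬝ᵥ A *ᵥ v := by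
  rw [h, dotProduct_smul, hv, smul_eq_mul, mul_one]

theorem Matrix.support_subset_of_diagonal_mul_mulVec_eq_smul {ι R : Type*} [Fintype ι]
    [DecidableEq ι] [Semiring R] [NoZeroDivisors R] {a d w : ι → R} {M : Matrix ι ι R} {μ : R}
    (h : (diagonal a * M) *ᵥ w = μ • diagonal d *ᵥ w) (hμ : μ ≠ 0) (hd : ∀ i, d i ≠ 0) :
    Function.support w ⊆ Function.support a := by
  intro i hwi hai
  have hi := congrFun h i
  rw [← mulVec_mulVec, mulVec_diagonal, Pi.smul_apply, mulVec_diagonal, hai, zero_mul,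
    smul_eq_mul, eq_comm] at hi
  exact hwi ((mul_eq_zero.mp ((mul_eq_zero.mp hi).resolve_left hμ)).resolve_left (hd i))

theorem supports_disjoint_or_equal
    (n : ℕ) (l : Fin n → ℝ)
    (hneg : ∀ i, l i < 0) (hinj : Function.Injective l)
    (Ψ : Matrix (Fin n) (Fin n) ℝ) (hΨ : Ψ = Matrix.of fun i j => -1 / (l i + l j))
    (Λ : Matrix (Fin n) (Fin n) ℝ) (hΛ : Λ = Matrix.diagonal l)
    (β γ : Fin n → ℝ) (μβ μγ : ℝ)
    (h1 : (diagonal γ * Ψ * diagonal γ) *ᵥ β = μβ • ((Λ * Λ) *ᵥ β))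
    (h2 : (diagonal β * Ψ * diagonal β) *ᵥ γ = μγ • ((Λ * Λ) *ᵥ γ))
    (hβn : β ⬝ᵥ (Λ * Λ) *ᵥ β = 1) (hγn : γ ⬝ᵥ (Λ * Λ) *ᵥ γ = 1) :
    {i | β i ≠ 0} ∩ {i | γ i ≠ 0} = ∅ ∨ {i | β i ≠ 0} = {i | γ i ≠ 0} := by
  refine or_iff_not_imp_left.mpr fun hmeet => ?_
  obtain ⟨k, hkβ, hkγ⟩ := Set.nonempty_iff_ne_empty.mpr hmeet
  have hΨpos : Ψ.PosDef := by
    convert posDef_of_inv_add (fun i => neg_pos.mpr (hneg i)) (neg_injective.comp hinj) using 1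
    rw [hΨ]
    ext i j
    rw [of_apply, of_apply, ← neg_add, inv_neg, neg_div, one_div]
  have heigenvalue_pos {a b : Fin n → ℝ} {μ : ℝ} (hab : a * b ≠ 0)
      (h : (diagonal a * Ψ * diagonal a) *ᵥ b = μ • ((Λ * Λ) *ᵥ b))
      (hb : b ⬝ᵥ (Λ * Λ) *ᵥ b = 1) : 0 < μ := by
    rw [eq_dotProduct_mulVec_of_mulVec_eq_smul h hb, dotProduct_diagonal_mul_mul_diagonal_mulVec]
    simpa using hΨpos.dotProduct_mulVec_pos hab
  have hμβ := heigenvalue_pos (fun h => mul_ne_zero hkγ hkβ (congrFun h k)) h1 hβn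
  have hμγ := heigenvalue_pos (fun h => mul_ne_zero hkβ hkγ (congrFun h k)) h2 hγn
  have hl : ∀ i, l i * l i ≠ 0 := fun i => mul_self_ne_zero.mpr (hneg i).ne
  rw [hΛ, diagonal_mul_diagonal, Matrix.mul_assoc] at h1 h2
  exact (support_subset_of_diagonal_mul_mulVec_eq_smul h1 hμβ.ne' hl).antisymm
    (support_subset_of_diagonal_mul_mulVec_eq_smul h2 hμγ.ne' hl)
end

section
/- Under the hypotheses of the coupled eigenvector system (diag(γ)Ψdiag(γ)β = μ_β Λ²β, diag(β)Ψdiag(β)γ = μ_γ Λ²γ, β᷀Λ²β = γ᷀Λ²γ = 1), if the supports of β and γ are equal and nonempty, then μ_β = μ_γ and there exists a sign vector s with s_i ∈ {−1,1} on the common support such that β_i = s_i γ_i for all i (equivalently β² = γ² entrywise). -/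
/-!
Put `w = β * γ`. Pairing the first equation with `β` and the second with `γ` gives
`μβ = w ⬝ᵥ Ψ *ᵥ w = μγ`. The matrix `Ψ` is positive definite: it is the Gram matrix of the
functions `t ↦ exp (λᵢ t)` in `L²(0, ∞)`, which are linearly independent because the `λᵢ` are
distinct. Since the supports agree, `w ≠ 0`, so `μ := μβ > 0`. Multiplying the `i`-th rows of the
two equations by `βᵢ` and `γᵢ` gives `μ λᵢ² βᵢ² = βᵢ γᵢ (Ψ w)ᵢ = μ λᵢ² γᵢ²`, hence `βᵢ² = γᵢ²`.
-/

open Matrix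

variable {ι : Type*} {R : Type*} [CommRing R]

theorem exists_sign_mul_eq_of_sq_eq_sq [NoZeroDivisors R] {β γ : ι → R}
    (h : ∀ i, β i ^ 2 = γ i ^ 2) :
    ∃ s : ι → R, (∀ i, s i = 1 ∨ s i = -1) ∧ ∀ i, β i = s i * γ i := by
  have hsign : ∀ i, ∃ s : R, (s = 1 ∨ s = -1) ∧ β i = s * γ i := fun i =>
    (sq_eq_sq_iff_eq_or_eq_neg.mp (h i)).elim (fun hi => ⟨1, .inl rfl, by rw [hi, one_mul]⟩)
      (fun hi => ⟨-1, .inr rfl, by rw [hi, neg_one_mul]⟩)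
  choose s hs using hsign
  exact ⟨s, fun i => (hs i).1, fun i => (hs i).2⟩

section Algebra

variable [Fintype ι] [DecidableEq ι]

theorem diagonal_mul_mul_diagonal_mulVec (A : Matrix ι ι R) (d x : ι → R) :
    (diagonal d * A * diagonal d) *ᵥ x = d * (A *ᵥ (d * x)) := by
  have hdiag : ∀ y, diagonal d *ᵥ y = d * y := fun y => funext (mulVec_diagonal d y)
  rw [← mulVec_mulVec, ← mulVec_mulVec, hdiag, hdiag]

theorem eq_dotProduct_mulVec_of_diagonal_mul_mul_diagonal_mulVec {A D : Matrix ι ι R}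
    {β γ : ι → R} {μ : R} (h : (diagonal γ * A * diagonal γ) *ᵥ β = μ • (D *ᵥ β))
    (hβ : β ⬝ᵥ D *ᵥ β = 1) : μ = (γ * β) ⬝ᵥ A *ᵥ (γ * β) := by
  calc μ = β ⬝ᵥ μ • (D *ᵥ β) := by rw [dotProduct_smul, hβ, smul_eq_mul, mul_one]
    _ = (γ * β) ⬝ᵥ A *ᵥ (γ * β) := by
      rw [← h, diagonal_mul_mul_diagonal_mulVec]
      simp only [dotProduct, Pi.mul_apply]
      exact Finset.sum_congr rfl fun i _ => by ring

theorem sq_eq_sq_of_diagonal_mul_mul_diagonal_mulVec [NoZeroDivisors R] {A : Matrix ι ι R}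
    {d β γ : ι → R} {μ : R} (h₁ : (diagonal γ * A * diagonal γ) *ᵥ β = μ • (diagonal d *ᵥ β))
    (h₂ : (diagonal β * A * diagonal β) *ᵥ γ = μ • (diagonal d *ᵥ γ)) (hμ : μ ≠ 0) {i : ι}
    (hd : d i ≠ 0) : β i ^ 2 = γ i ^ 2 := by
  have e₁ := congrFun h₁ i
  have e₂ := congrFun h₂ i
  simp only [diagonal_mul_mul_diagonal_mulVec, mul_comm β γ, Pi.mul_apply, Pi.smul_apply,
    mulVec_diagonal, smul_eq_mul] at e₁ e₂
  have : μ * d i * (β i ^ 2 - γ i ^ 2) = 0 := by linear_combination γ i * e₂ - β i * e₁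
  exact sub_eq_zero.mp ((mul_eq_zero.mp this).resolve_left (mul_ne_zero hμ hd))

end Algebra

section Cauchy

open MeasureTheory Real Set

theorem integrableOn_mul_exp_add_mul {l : ι → ℝ} (hl : ∀ i, l i < 0) (w : ι → ℝ) (i j : ι) :
    IntegrableOn (fun t => w i * w j * exp ((l i + l j) * t)) (Ioi 0) :=
  (integrableOn_exp_mul_Ioi (add_neg (hl i) (hl j)) 0).const_mul _

variable [Fintype ι]

theorem eq_zero_of_sum_mul_exp_mul_eq_zero {l : ι → ℝ} (hl : Function.Injective l) {w : ι → ℝ}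
    (h : ∀ t > 0, ∑ i, w i * exp (l i * t) = 0) : w = 0 := by
  -- distinct characters `k ↦ exp (l i) ^ k` of `ℕ` are linearly independent (Dedekind–Artin)
  let χ : ι → Multiplicative ℕ →* ℝ := fun i => powersHom ℝ (exp (l i))
  have hχ : Function.Injective χ := (powersHom ℝ).injective.comp (exp_injective.comp hl)
  have hind := (linearIndependent_monoidHom (Multiplicative ℕ) ℝ).comp χ hχ
  have hcomb : ∑ i, (w i * exp (l i)) • ⇑(χ i) = 0 := by
    funext k
    simp only [Finset.sum_apply, Pi.smul_apply, smul_eq_mul, Pi.zero_apply, χ, powersHom_apply]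
    rw [← h (Multiplicative.toAdd k + 1) (by positivity)]
    refine Finset.sum_congr rfl fun i _ => ?_
    rw [← exp_nat_mul, mul_assoc, ← exp_add]
    ring_nf
  funext i
  exact (mul_eq_zero.mp (Fintype.linearIndependent_iff.mp hind _ hcomb i)).resolve_right
    (exp_ne_zero _)

theorem sum_mul_exp_mul_sq (l w : ι → ℝ) (t : ℝ) :
    (∑ i, w i * exp (l i * t)) ^ 2 = ∑ i, ∑ j, w i * w j * exp ((l i + l j) * t) := by
  rw [sq, Finset.sum_mul_sum]
  refine Finset.sum_congr rfl fun i _ => Finset.sum_congr rfl fun j _ => ?_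
  rw [add_mul, exp_add]
  ring

theorem integrableOn_sum_mul_exp_mul_sq {l : ι → ℝ} (hl : ∀ i, l i < 0) (w : ι → ℝ) :
    IntegrableOn (fun t => (∑ i, w i * exp (l i * t)) ^ 2) (Ioi 0) := by
  simp_rw [sum_mul_exp_mul_sq]
  exact integrable_finsetSum _ fun i _ => integrable_finsetSum _ fun j _ =>
    integrableOn_mul_exp_add_mul hl w i j

theorem dotProduct_mulVec_neg_one_div_add_eq_integral {l : ι → ℝ} (hl : ∀ i, l i < 0)
    (w : ι → ℝ) :
    w ⬝ᵥ (of fun i j => -1 / (l i + l j)) *ᵥ w =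
      ∫ t in Ioi 0, (∑ i, w i * exp (l i * t)) ^ 2 := by
  simp_rw [sum_mul_exp_mul_sq]
  rw [integral_finsetSum _ fun i _ => integrable_finsetSum _ fun j _ =>
    integrableOn_mul_exp_add_mul hl w i j]
  simp only [dotProduct, mulVec, of_apply, Finset.mul_sum]
  refine Finset.sum_congr rfl fun i _ => ?_
  rw [integral_finsetSum _ fun j _ => integrableOn_mul_exp_add_mul hl w i j]
  refine Finset.sum_congr rfl fun j _ => ?_
  rw [integral_const_mul, integral_exp_mul_Ioi (add_neg (hl i) (hl j)), mul_zero, exp_zero]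
  ring

theorem posDef_neg_one_div_add {l : ι → ℝ} (hl : ∀ i, l i < 0) (hinj : Function.Injective l) :
    (of fun i j => -1 / (l i + l j)).PosDef := by
  refine .of_dotProduct_mulVec_pos (IsHermitian.ext fun i j => by simp [add_comm]) fun w hw => ?_
  rw [star_trivial, dotProduct_mulVec_neg_one_div_add_eq_integral hl]
  set f : ℝ → ℝ := fun t => ∑ i, w i * exp (l i * t)
  have hf : Continuous f := by fun_prop
  refine (setIntegral_nonneg measurableSet_Ioi fun t _ => sq_nonneg (f t)).lt_of_ne' fun h0 => hw ?_
  rw [setIntegral_eq_zero_iff_of_nonneg_ae (.of_forall fun t => sq_nonneg (f t))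
    (integrableOn_sum_mul_exp_mul_sq hl w)] at h0
  refine eq_zero_of_sum_mul_exp_mul_eq_zero hinj fun t ht => ?_
  exact pow_eq_zero_iff two_ne_zero |>.mp <|
    Measure.eqOn_open_of_ae_eq h0 isOpen_Ioi (hf.pow 2).continuousOn continuousOn_const ht

end Cauchy

theorem equal_supports_sign_relation_general
    (n : ℕ) (l : Fin n → ℝ)
    (hneg : ∀ i, l i < 0) (hinj : Function.Injective l)
    (Ψ : Matrix (Fin n) (Fin n) ℝ) (hΨ : Ψ = Matrix.of fun i j => -1 / (l i + l j))
    (Λ : Matrix (Fin n) (Fin n) ℝ) (hΛ : Λ = Matrix.diagonal l)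
    (β γ : Fin n → ℝ) (μβ μγ : ℝ)
    (h1 : (diagonal γ * Ψ * diagonal γ) *ᵥ β = μβ • ((Λ * Λ) *ᵥ β))
    (h2 : (diagonal β * Ψ * diagonal β) *ᵥ γ = μγ • ((Λ * Λ) *ᵥ γ))
    (hβn : β ⬝ᵥ (Λ * Λ) *ᵥ β = 1) (hγn : γ ⬝ᵥ (Λ * Λ) *ᵥ γ = 1)
    (hsupp : {i | β i ≠ 0} = {i | γ i ≠ 0}) :
    μβ = μγ ∧
      (∃ s : Fin n → ℝ, (∀ i, β i ≠ 0 → s i = 1 ∨ s i = -1) ∧ ∀ i, β i = s i * γ i) ∧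
      ∀ i, (β i) ^ 2 = (γ i) ^ 2 := by
  subst hΨ hΛ
  have hμβ := eq_dotProduct_mulVec_of_diagonal_mul_mul_diagonal_mulVec h1 hβn
  have hμ : μβ = μγ := by
    rw [hμβ, eq_dotProduct_mulVec_of_diagonal_mul_mul_diagonal_mulVec h2 hγn, mul_comm γ β]
  obtain ⟨i, hi⟩ : ∃ i, β i ≠ 0 := by
    by_contra! hβ
    simp [show β = 0 from funext hβ] at hβn
  have hw : γ * β ≠ 0 := fun h =>
    mul_ne_zero (show i ∈ {i | γ i ≠ 0} from hsupp ▸ hi) hi (congrFun h i)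
  have hpos : 0 < μβ := by
    simpa [hμβ] using (posDef_neg_one_div_add hneg hinj).dotProduct_mulVec_pos hw
  rw [diagonal_mul_diagonal] at h1 h2
  have hsq : ∀ i, β i ^ 2 = γ i ^ 2 := fun i =>
    sq_eq_sq_of_diagonal_mul_mul_diagonal_mulVec h1 (hμ ▸ h2) hpos.ne'
      (mul_ne_zero (hneg i).ne (hneg i).ne)
  obtain ⟨s, hs, hβs⟩ := exists_sign_mul_eq_of_sq_eq_sq hsq
  exact ⟨hμ, ⟨s, fun i _ => hs i, hβs⟩, hsq⟩

theorem equal_supports_sign_relation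
    (n : ℕ) (l : Fin n → ℝ)
    (hneg : ∀ i, l i < 0) (hinj : Function.Injective l)
    (Ψ : Matrix (Fin n) (Fin n) ℝ) (hΨ : Ψ = Matrix.of fun i j => -1 / (l i + l j))
    (Λ : Matrix (Fin n) (Fin n) ℝ) (hΛ : Λ = Matrix.diagonal l)
    (β γ : Fin n → ℝ) (μβ μγ : ℝ)
    (h1 : (diagonal γ * Ψ * diagonal γ) *ᵥ β = μβ • ((Λ * Λ) *ᵥ β))
    (h2 : (diagonal β * Ψ * diagonal β) *ᵥ γ = μγ • ((Λ * Λ) *ᵥ γ))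
    (hβn : β ⬝ᵥ (Λ * Λ) *ᵥ β = 1) (hγn : γ ⬝ᵥ (Λ * Λ) *ᵥ γ = 1)
    (hsupp : {i | β i ≠ 0} = {i | γ i ≠ 0})
    (hne : {i | β i ≠ 0}.Nonempty) :
    μβ = μγ ∧
      (∃ s : Fin n → ℝ, (∀ i, β i ≠ 0 → s i = 1 ∨ s i = -1) ∧ ∀ i, β i = s i * γ i) ∧
      ∀ i, (β i) ^ 2 = (γ i) ^ 2 :=
  equal_supports_sign_relation_general n l hneg hinj Ψ hΨ Λ hΛ β γ μβ μγ h1 h2 hβn hγn hsupp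
end
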